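/- arXiv:2603.24028 — 3 statements merged into one kernel-verified Lean document; each statement's English description precedes it below -/
import Mathlib

section
/- Let 0 < R₁ < R₂ and θ₁, θ₂ ∈ ℝ with C₀ = 0 and Γ₀ = 0, where C₀ = R₁²R₂² + R₁²R₂θ₂ + R₁R₂²θ₁ + θ₁θ₂R₁(R₂−R₁) and Γ₀ = R₁²R₂²(θ₁+θ₂) + θ₁θ₂R₁R₂(R₂−R₁). Then a contradiction follows; i.e., C₀ and Γ₀ cannot both vanish. -/
theorem C0_Gamma0_not_both_zero (R1 R2 θ1 θ2 : ℝ) (hR1 : 0 < R1) (hR12 : R1 < R2)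
    (hC0 : R1 ^ 2 * R2 ^ 2 + R1 ^ 2 * R2 * θ2 + R1 * R2 ^ 2 * θ1
      + θ1 * θ2 * R1 * (R2 - R1) = 0)
    (hΓ0 : R1 ^ 2 * R2 ^ 2 * (θ1 + θ2) + θ1 * θ2 * R1 * R2 * (R2 - R1) = 0) :
    False := by
  have hR2 : 0 < R2 := hR1.trans hR12
  have hpos : 0 < R1 * R2 ^ 2 := by positivity
  have h2 : R1 * R2 ^ 2 * (R1 * R2 + (R2 - R1) * θ1) = 0 := by
    linear_combination R2 * hC0 - hΓ0
  have h1 : R1 * R2 + (R2 - R1) * θ1 = 0 := by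
    rcases mul_eq_zero.mp h2 with h | h
    · exact absurd h hpos.ne'
    · exact h
  have h3 : R1 * R2 ^ 2 * (R1 + θ1) = 0 := by
    linear_combination hC0 - R1 * θ2 * h1
  have h4 : R1 + θ1 = 0 := by
    rcases mul_eq_zero.mp h3 with h | h
    · exact absurd h hpos.ne'
    · exact h
  nlinarith [sq_nonneg R1]
end

section
/- Let 0 < R₁ < R₂, α₁, α₂ ∈ ℝ, and θ_j = α_j R_j². Define f : (0,∞) → ℝ piecewise by f(r) = a on (0,R₁), f(r) = b + c/r on (R₁,R₂), and f(r) = d + e/r on (R₂,∞), where a ∈ ℝ, c = −θ₁a, b = a + (θ₁/R₁)a, e = c − θ₂(b + c/R₂), and d = b + c/R₂ − e/R₂. Then f is continuous at R₁ and R₂, satisfies the jump conditions f'(R₁+) − f'(R₁−) = α₁ f(R₁) and f'(R₂+) − f'(R₂−) = α₂ f(R₂), and d = (C₀/(R₁²R₂²))·a, where C₀ = R₁²R₂² + R₁R₂²θ₁ + R₁²R₂θ₂ + θ₁θ₂R₁(R₂−R₁). -/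
/-!
Near each shell `f` coincides with a function glued at the shell from two smooth pieces, so its
continuity and one-sided derivatives there are those of the pieces (`0` and `-c / r²` at `R₁`,
`-c / r²` and `-e / r²` at `R₂`). The coefficients `b`, `c`, `e` are chosen exactly so that the
pieces agree at each shell and their derivatives jump by `αⱼ f(Rⱼ)`; the formula for `d` is then
field arithmetic.
-/

open Set Filter Topology

section Gluing

variable {g h : ℝ → ℝ} {g' h' x : ℝ}

theorem continuousAt_ite_lt (hg : ContinuousAt g x) (hh : ContinuousAt h x) (hx : g x = h x) :
    ContinuousAt (fun r => if r < x then g r else h r) x := by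
  rw [continuousAt_iff_continuous_left_right]
  constructor
  · refine hg.continuousWithinAt.congr (fun r hr => ?_) (by simp [hx])
    rcases (mem_Iic.mp hr).lt_or_eq with hlt | rfl
    · simp [hlt]
    · simp [hx]
  · exact hh.continuousWithinAt.congr (fun r hr => by simp [not_lt.mpr (mem_Ici.mp hr)])
      (by simp)

theorem hasDerivWithinAt_ite_lt_Iio (hg : HasDerivAt g g' x) (hx : g x = h x) :
    HasDerivWithinAt (fun r => if r < x then g r else h r) g' (Iio x) x :=
  hg.hasDerivWithinAt.congr (fun r hr => by simp [mem_Iio.mp hr]) (by simp [hx])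

theorem hasDerivWithinAt_ite_lt_Ioi (hh : HasDerivAt h h' x) :
    HasDerivWithinAt (fun r => if r < x then g r else h r) h' (Ioi x) x :=
  hh.hasDerivWithinAt.congr (fun r hr => by simp [not_lt.mpr (mem_Ioi.mp hr).le]) (by simp)

theorem derivWithin_Ioi_sub_derivWithin_Iio_of_eventuallyEq_ite {F : ℝ → ℝ}
    (hF : F =ᶠ[𝓝 x] fun r => if r < x then g r else h r)
    (hg : HasDerivAt g g' x) (hh : HasDerivAt h h' x) (hx : g x = h x) :
    derivWithin F (Ioi x) x - derivWithin F (Iio x) x = h' - g' := by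
  rw [((hasDerivWithinAt_ite_lt_Ioi hh).congr_of_eventuallyEq
        (hF.filter_mono nhdsWithin_le_nhds) hF.eq_of_nhds).derivWithin (uniqueDiffWithinAt_Ioi x),
    ((hasDerivWithinAt_ite_lt_Iio hg hx).congr_of_eventuallyEq
        (hF.filter_mono nhdsWithin_le_nhds) hF.eq_of_nhds).derivWithin (uniqueDiffWithinAt_Iio x)]

end Gluing

section ThreePieces

variable {u v w : ℝ → ℝ} {x y : ℝ}

theorem ite_lt_ite_lt_eventuallyEq_left (hxy : x < y) :
    (fun r => if r < x then u r else if r < y then v r else w r) =ᶠ[𝓝 x]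
      fun r => if r < x then u r else v r := by
  filter_upwards [Iio_mem_nhds hxy] with r hr
  simp [mem_Iio.mp hr]

theorem ite_lt_ite_lt_eventuallyEq_right (hxy : x < y) :
    (fun r => if r < x then u r else if r < y then v r else w r) =ᶠ[𝓝 y]
      fun r => if r < y then v r else w r := by
  filter_upwards [Ioi_mem_nhds hxy] with r hr
  simp [not_lt.mpr (mem_Ioi.mp hr).le]

end ThreePieces

theorem hasDerivAt_const_add_div (p q : ℝ) {x : ℝ} (hx : x ≠ 0) :
    HasDerivAt (fun r => p + q / r) (-(q / x ^ 2)) x := by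
  simpa [div_eq_mul_inv] using ((hasDerivAt_inv hx).const_mul q).const_add p

theorem zero_energy_radial_solution (R1 R2 α1 α2 a : ℝ)
    (hR1 : 0 < R1) (hR12 : R1 < R2) :
    let θ1 : ℝ := α1 * R1 ^ 2
    let θ2 : ℝ := α2 * R2 ^ 2
    let c : ℝ := -θ1 * a
    let b : ℝ := a + (θ1 / R1) * a
    let e : ℝ := c - θ2 * (b + c / R2)
    let d : ℝ := b + c / R2 - e / R2
    let f : ℝ → ℝ := fun r =>
      if r < R1 then a else if r < R2 then b + c / r else d + e / r
    let C0 : ℝ := R1 ^ 2 * R2 ^ 2 + R1 * R2 ^ 2 * θ1 + R1 ^ 2 * R2 * θ2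
      + θ1 * θ2 * R1 * (R2 - R1)
    ContinuousAt f R1 ∧ ContinuousAt f R2 ∧
    derivWithin f (Set.Ioi R1) R1 - derivWithin f (Set.Iio R1) R1 = α1 * f R1 ∧
    derivWithin f (Set.Ioi R2) R2 - derivWithin f (Set.Iio R2) R2 = α2 * f R2 ∧
    d = (C0 / (R1 ^ 2 * R2 ^ 2)) * a := by
  intro θ1 θ2 c b e d f C0
  have hR2 : 0 < R2 := hR1.trans hR12
  have hmatch1 : a = b + c / R1 := by simp only [b, c, θ1]; field_simp; ring
  have hmatch2 : b + c / R2 = d + e / R2 := by simp only [d]; ring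
  have hfR1 : f R1 = a := by simp [f, hR12, hmatch1]
  have hfR2 : f R2 = b + c / R2 := by simp [f, not_lt.mpr hR12.le, hmatch2]
  have hF1 := ite_lt_ite_lt_eventuallyEq_left (u := fun _ => a) (v := fun r => b + c / r)
    (w := fun r => d + e / r) hR12
  have hF2 := ite_lt_ite_lt_eventuallyEq_right (u := fun _ => a) (v := fun r => b + c / r)
    (w := fun r => d + e / r) hR12
  have hv1 := hasDerivAt_const_add_div b c hR1.ne'
  have hv2 := hasDerivAt_const_add_div b c hR2.ne'
  have hw2 := hasDerivAt_const_add_div d e hR2.ne'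
  refine ⟨(continuousAt_ite_lt continuousAt_const hv1.continuousAt hmatch1).congr hF1.symm,
    (continuousAt_ite_lt hv2.continuousAt hw2.continuousAt hmatch2).congr hF2.symm,
    ?_, ?_, ?_⟩
  · rw [derivWithin_Ioi_sub_derivWithin_Iio_of_eventuallyEq_ite hF1 (hasDerivAt_const R1 a)
      hv1 hmatch1, hfR1]
    simp only [c, θ1]; field_simp; ring
  · rw [derivWithin_Ioi_sub_derivWithin_Iio_of_eventuallyEq_ite hF2 hv2 hw2 hmatch2, hfR2]
    simp only [e, θ2]; field_simp; ring
  · simp only [d, e, b, c, C0, θ1, θ2]; field_simp; ring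
end

section
/- Let 0 < R₁ < R₂, θ₁, θ₂ ∈ ℝ, and suppose C₀ = 0, where C₀ = R₁²R₂² + R₁²R₂θ₂ + R₁R₂²θ₁ + θ₁θ₂R₁(R₂−R₁). Define A₀(k) = R₁²R₂²k² + R₁²k cos(kR₂)sin(kR₂)θ₂ + R₂²k cos(kR₁)sin(kR₁)θ₁ + θ₁θ₂(cos(kR₁)cos(kR₂)sin(kR₁)sin(kR₂) − cos²(kR₂)sin²(kR₁)). Then A₀(k) = C₂k⁴ + O(k⁶) as k → 0⁺, where C₂ = −(2/3)R₁²R₂³θ₂ − (2/3)R₁³R₂²θ₁ + θ₁θ₂(−(2/3)(R₁³R₂ + R₁R₂³) + R₁²R₂² + (1/3)R₁⁴). -/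
/-!
Expand to order `k⁶` at `k = 0`. Writing `cos x sin x = sin (2x) / 2`, the Taylor bounds
`sin x = x - x³/6 + O(x⁵)` and `cos x = 1 - x²/2 + O(x⁴)` give the expansions of
`k cos(kR) sin(kR)`, of `cos(kR₁) sin(kR₁) cos(kR₂) sin(kR₂)` and of `(cos(kR₂) sin(kR₁))²`, since
in a product the orders add up: `f g - p q = f (g - q) + (f - p) q`. What is left of `A₀` is the
polynomial `C₀ k² + C₂ k⁴`, and `C₀ = 0`.
-/

open Real Asymptotics Filter Topology

section PowerOrder

variable {𝕜 E : Type*} [NontriviallyNormedField 𝕜] [SeminormedAddCommGroup E]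

lemma isBigO_pow_zero_of_continuousAt {f : 𝕜 → E} (hf : ContinuousAt f 0) :
    f =O[𝓝 0] (· ^ 0) := by
  simpa using hf.tendsto.isBigO_one 𝕜

lemma isBigO_pow_one_of_differentiableAt {f : 𝕜 → 𝕜} (hf : DifferentiableAt 𝕜 f 0)
    (h0 : f 0 = 0) : f =O[𝓝 0] (· ^ 1) := by
  simpa [h0] using hf.isBigO_sub

lemma Asymptotics.IsBigO.comp_mul_const {f : 𝕜 → E} {n : ℕ} (h : f =O[𝓝 0] (· ^ n)) (c : 𝕜) :
    (fun x => f (x * c)) =O[𝓝 0] (· ^ n) := by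
  have hc : Tendsto (fun x : 𝕜 => x * c) (𝓝 0) (𝓝 0) := by
    simpa using (continuous_mul_const c).tendsto 0
  exact (h.comp_tendsto hc).trans
    ((isBigO_const_mul_self (c ^ n) (· ^ n) _).congr_left fun x => by
      simp only [Function.comp_apply]; ring)

lemma isBigO_mul_sub_mul {f g p q : 𝕜 → 𝕜} {a b c d : ℕ}
    (hf : f =O[𝓝 0] (· ^ a)) (hgq : (fun x => g x - q x) =O[𝓝 0] (· ^ b))
    (hfp : (fun x => f x - p x) =O[𝓝 0] (· ^ c)) (hq : q =O[𝓝 0] (· ^ d))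
    (h : c + d = a + b) :
    (fun x => f x * g x - p x * q x) =O[𝓝 0] (· ^ (a + b)) := by
  have h₁ : (fun x => f x * (g x - q x)) =O[𝓝 0] (· ^ (a + b)) := by
    simpa only [pow_add] using hf.mul hgq
  have h₂ : (fun x => (f x - p x) * q x) =O[𝓝 0] (· ^ (a + b)) := by
    simpa only [← h, pow_add] using hfp.mul hq
  exact (h₁.add h₂).congr_left fun x => by ring

lemma exists_pos_bound_of_isBigO_pow {f : ℝ → ℝ} {n : ℕ} (h : f =O[𝓝 0] (· ^ n)) :
    ∃ C > 0, ∃ ε > 0, ∀ k : ℝ, 0 < k → k < ε → |f k| ≤ C * k ^ n := by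
  obtain ⟨C, hC, hfC⟩ := h.exists_pos
  obtain ⟨ε, hε, hball⟩ := Metric.eventually_nhds_iff.1 hfC.bound
  refine ⟨C, hC, ε, hε, fun k hk hkε => ?_⟩
  have hkball : dist k 0 < ε := by rwa [Real.dist_0_eq_abs, abs_of_pos hk]
  simpa [abs_of_pos hk] using hball hkball

end PowerOrder

lemma sin_sub_taylor_isBigO : (fun x : ℝ => sin x - (x - x ^ 3 / 6)) =O[𝓝 0] (· ^ 5) := by
  refine IsBigO.of_bound (1 / 100) ?_
  filter_upwards [Metric.closedBall_mem_nhds (0 : ℝ) one_pos] with x hx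
  have := sin_bound (by simpa using hx)
  simp only [Real.norm_eq_abs, abs_pow]
  linarith

lemma cos_sub_taylor_isBigO : (fun x : ℝ => cos x - (1 - x ^ 2 / 2)) =O[𝓝 0] (· ^ 4) := by
  refine IsBigO.of_bound (5 / 96) ?_
  filter_upwards [Metric.closedBall_mem_nhds (0 : ℝ) one_pos] with x hx
  have := cos_bound (by simpa using hx)
  simp only [Real.norm_eq_abs, abs_pow]
  linarith

lemma cos_mul_sin_sub_taylor_isBigO :
    (fun x : ℝ => cos x * sin x - (x - 2 / 3 * x ^ 3)) =O[𝓝 0] (· ^ 5) :=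
  ((sin_sub_taylor_isBigO.comp_mul_const 2).const_mul_left (1 / 2)).congr_left fun x => by
    rw [mul_comm x 2, sin_two_mul]
    ring

section Expansions

variable (R R₁ R₂ : ℝ)

lemma mul_cos_mul_sin_sub_isBigO :
    (fun k => k * (cos (k * R) * sin (k * R)) - (R * k ^ 2 - 2 / 3 * R ^ 3 * k ^ 4))
      =O[𝓝 0] (· ^ 6) :=
  ((isBigO_refl (fun k : ℝ => k) _).mul (cos_mul_sin_sub_taylor_isBigO.comp_mul_const R)).congr
    (fun k => by ring) (fun k => by ring)

lemma cos_mul_sin_mul_cos_mul_sin_sub_isBigO :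
    (fun k => cos (k * R₁) * sin (k * R₁) * (cos (k * R₂) * sin (k * R₂))
      - (R₁ * R₂ * k ^ 2 - 2 / 3 * (R₁ ^ 3 * R₂ + R₁ * R₂ ^ 3) * k ^ 4)) =O[𝓝 0] (· ^ 6) := by
  have hprod := isBigO_mul_sub_mul (a := 1) (c := 5)
    (isBigO_pow_one_of_differentiableAt (by fun_prop) (by simp))
    (cos_mul_sin_sub_taylor_isBigO.comp_mul_const R₂)
    (cos_mul_sin_sub_taylor_isBigO.comp_mul_const R₁)
    (isBigO_pow_one_of_differentiableAt (by fun_prop) (by simp)) rfl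
  exact (hprod.add (isBigO_const_mul_self (4 / 9 * R₁ ^ 3 * R₂ ^ 3) (· ^ 6) _)).congr_left
    fun k => by ring

lemma cos_mul_sin_sub_isBigO :
    (fun k => cos (k * R₂) * sin (k * R₁)
      - (k * R₁ - (k * R₁) ^ 3 / 6 - k * R₁ * (k * R₂) ^ 2 / 2)) =O[𝓝 0] (· ^ 5) := by
  have hprod := isBigO_mul_sub_mul (a := 0) (c := 4)
    (isBigO_pow_zero_of_continuousAt (by fun_prop))
    (sin_sub_taylor_isBigO.comp_mul_const R₁)
    (cos_sub_taylor_isBigO.comp_mul_const R₂)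
    (isBigO_pow_one_of_differentiableAt (by fun_prop) (by simp)) rfl
  exact (hprod.add (isBigO_const_mul_self (R₁ ^ 3 * R₂ ^ 2 / 12) (· ^ 5) _)).congr_left
    fun k => by ring

lemma cos_mul_sin_sq_sub_isBigO :
    (fun k => (cos (k * R₂) * sin (k * R₁)) ^ 2
      - (R₁ ^ 2 * k ^ 2 - (R₁ ^ 4 / 3 + R₁ ^ 2 * R₂ ^ 2) * k ^ 4)) =O[𝓝 0] (· ^ 6) := by
  have hprod := isBigO_mul_sub_mul (a := 1) (c := 5) (f := fun k => cos (k * R₂) * sin (k * R₁))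
    (isBigO_pow_one_of_differentiableAt (by fun_prop) (by simp))
    (cos_mul_sin_sub_isBigO R₁ R₂) (cos_mul_sin_sub_isBigO R₁ R₂)
    (isBigO_pow_one_of_differentiableAt (by fun_prop) (by simp)) rfl
  exact (hprod.add (isBigO_const_mul_self
    (R₁ ^ 6 / 36 + R₁ ^ 4 * R₂ ^ 2 / 6 + R₁ ^ 2 * R₂ ^ 4 / 4) (· ^ 6) _)).congr_left
    fun k => by ring

end Expansions

theorem A0_exceptional_expansion_general (R1 R2 θ1 θ2 : ℝ)
    (hC0 : R1 ^ 2 * R2 ^ 2 + R1 ^ 2 * R2 * θ2 + R1 * R2 ^ 2 * θ1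
      + θ1 * θ2 * R1 * (R2 - R1) = 0) :
    let A0 : ℝ → ℝ := fun k =>
      R1 ^ 2 * R2 ^ 2 * k ^ 2
      + R1 ^ 2 * k * Real.cos (k * R2) * Real.sin (k * R2) * θ2
      + R2 ^ 2 * k * Real.cos (k * R1) * Real.sin (k * R1) * θ1
      + θ1 * θ2 * (Real.cos (k * R1) * Real.cos (k * R2) * Real.sin (k * R1) * Real.sin (k * R2)
          - Real.cos (k * R2) ^ 2 * Real.sin (k * R1) ^ 2)
    let C2 : ℝ := -(2 / 3) * R1 ^ 2 * R2 ^ 3 * θ2 - (2 / 3) * R1 ^ 3 * R2 ^ 2 * θ1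
      + θ1 * θ2 * (-(2 / 3) * (R1 ^ 3 * R2 + R1 * R2 ^ 3) + R1 ^ 2 * R2 ^ 2 + (1 / 3) * R1 ^ 4)
    ∃ C > 0, ∃ ε > 0, ∀ k : ℝ, 0 < k → k < ε → |A0 k - C2 * k ^ 4| ≤ C * k ^ 6 := by
  intro A0 C2
  apply exists_pos_bound_of_isBigO_pow
  have hθ2 := (mul_cos_mul_sin_sub_isBigO R2).const_mul_left (θ2 * R1 ^ 2)
  have hθ1 := (mul_cos_mul_sin_sub_isBigO R1).const_mul_left (θ1 * R2 ^ 2)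
  have hθ12 := ((cos_mul_sin_mul_cos_mul_sin_sub_isBigO R1 R2).sub
    (cos_mul_sin_sq_sub_isBigO R1 R2)).const_mul_left (θ1 * θ2)
  exact ((hθ2.add hθ1).add hθ12).congr_left fun k => by
    simp only [A0, C2]
    linear_combination -k ^ 2 * hC0

theorem A0_exceptional_expansion (R1 R2 θ1 θ2 : ℝ) (hR1 : 0 < R1) (hR12 : R1 < R2)
    (hC0 : R1 ^ 2 * R2 ^ 2 + R1 ^ 2 * R2 * θ2 + R1 * R2 ^ 2 * θ1
      + θ1 * θ2 * R1 * (R2 - R1) = 0) :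
    let A0 : ℝ → ℝ := fun k =>
      R1 ^ 2 * R2 ^ 2 * k ^ 2
      + R1 ^ 2 * k * Real.cos (k * R2) * Real.sin (k * R2) * θ2
      + R2 ^ 2 * k * Real.cos (k * R1) * Real.sin (k * R1) * θ1
      + θ1 * θ2 * (Real.cos (k * R1) * Real.cos (k * R2) * Real.sin (k * R1) * Real.sin (k * R2)
          - Real.cos (k * R2) ^ 2 * Real.sin (k * R1) ^ 2)
    let C2 : ℝ := -(2 / 3) * R1 ^ 2 * R2 ^ 3 * θ2 - (2 / 3) * R1 ^ 3 * R2 ^ 2 * θ1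
      + θ1 * θ2 * (-(2 / 3) * (R1 ^ 3 * R2 + R1 * R2 ^ 3) + R1 ^ 2 * R2 ^ 2 + (1 / 3) * R1 ^ 4)
    ∃ C > 0, ∃ ε > 0, ∀ k : ℝ, 0 < k → k < ε → |A0 k - C2 * k ^ 4| ≤ C * k ^ 6 :=
  A0_exceptional_expansion_general R1 R2 θ1 θ2 hC0
end
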